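/- Let N be a positive integer, p a prime, φ : ℚ^N → ℚ^N an endomorphism with matrix (a_{ij}), and φ_p : ℚ_p^N → ℚ_p^N the ℚ_p-linear endomorphism with the same matrix. Write ‖φ_p‖_p = max_{1≤i≤N} Σ_{j=1}^N |a_{ij}|_p, and for positive integers m, n set T^p_n(φ, E_m) = α_p(T_n(φ, E_m)) + ℤ_p^N. Then: (1) T^p_n(φ, E_m) ⊆ T_n(φ_p, D_{p,N}(|1/m|_p)) for all m, n ≥ 1; (2) if h is the maximal nonnegative integer with p^h ≤ ‖φ_p‖_p and p^h divides m, then T_n^≤(φ_p, ℤ_p^N) ⊆ T^p_n(φ, E_m) for all n ≥ 1. -/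

import Mathlib

open Pointwise

noncomputable section

/-- The `n`-th `φ`-trajectory of `C`: `C + φ C + ⋯ + φ^{n-1} C` (pointwise sum of sets). -/
def traj {G : Type*} [AddCommGroup G] (φ : G → G) (C : Set G) (n : ℕ) : Set G :=
  ∑ i ∈ Finset.range n, φ^[i] '' C

/-- The minor `n`-th `φ`-trajectory of `C`: `C + φ^{n-1} C` (pointwise sum of sets). -/
def trajLe {G : Type*} [AddCommGroup G] (φ : G → G) (C : Set G) (n : ℕ) : Set G :=
  C + φ^[n - 1] '' C

/-- The finite subset `E_m = { (c_1,…,c_N) : c_i = j/m, j ∈ ℤ, |j| ≤ m }` of `ℚ^N`. -/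
def Em (N m : ℕ) : Set (Fin N → ℚ) :=
  {c | ∀ i, ∃ j : ℤ, |j| ≤ (m : ℤ) ∧ c i = (j : ℚ) / (m : ℚ)}

/-!
Both inclusions are set algebra on top of two facts: the coordinatewise embedding
`α_p : ℚ^N → ℚ_p^N` intertwines `φ` and `φ_p`, and in the ultrametric space `ℚ_p^N` a polydisc
absorbs every smaller one, `D(r) + D(s) ⊆ D(r)` for `s ≤ r`.
For (1), `α_p(E_m) ⊆ D(|1/m|_p)`, so `ℤ_p^N ⊆ D(|1/m|_p)` is absorbed by the first summand.
For (2), the choice of `h` gives `φ_p(ℤ_p^N) ⊆ D(p^h)`, and since `p^h ∣ m` every point of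
`D(p^h)` lies within `ℤ_p^N` of a point `k/p^h = (k m/p^h)/m` of `α_p(E_m)`, `0 ≤ k < p^h`;
so `φ_p^k(ℤ_p^N) ⊆ α_p(T_{k+1}(φ, E_m)) + ℤ_p^N` by induction on `k`.
-/

section Trajectory

variable {G H : Type*} [AddCommGroup G] [AddCommGroup H]

theorem traj_zero (φ : G → G) (C : Set G) : traj φ C 0 = 0 := Finset.sum_range_zero _

theorem traj_one (φ : G → G) (C : Set G) : traj φ C 1 = C := by
  simp [traj]

theorem traj_succ (φ : G →+ G) (C : Set G) (n : ℕ) :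
    traj φ C (n + 1) = C + φ '' traj φ C n := by
  rw [traj, Finset.sum_range_succ', add_comm, traj, Set.image_finsetSum]
  simp only [Function.iterate_succ', Set.image_comp, Function.iterate_zero, Set.image_id]

theorem traj_mono (φ : G →+ G) {C D : Set G} (hCD : C ⊆ D) (n : ℕ) :
    traj φ C n ⊆ traj φ D n := by
  induction n with
  | zero => simp [traj_zero]
  | succ n ih =>
    rw [traj_succ, traj_succ]
    exact Set.add_subset_add hCD (Set.image_mono ih)

theorem image_traj (f : H →+ G) (φ : H →+ H) (ψ : G →+ G) (hf : ∀ x, f (φ x) = ψ (f x))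
    (C : Set H) (n : ℕ) : f '' traj φ C n = traj ψ (f '' C) n := by
  induction n with
  | zero => rw [traj_zero, traj_zero, Set.image_zero, map_zero, Set.singleton_zero]
  | succ n ih =>
    rw [traj_succ, traj_succ, Set.image_add, ← ih, Set.image_image, Set.image_image]
    simp only [hf]

theorem traj_add_subset (φ : G →+ G) {C D : Set G} (hCD : C + D ⊆ C) {n : ℕ} (hn : n ≠ 0) :
    traj φ C n + D ⊆ traj φ C n := by
  obtain ⟨k, rfl⟩ := Nat.exists_eq_succ_of_ne_zero hn
  rw [traj_succ, add_right_comm]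
  exact Set.add_subset_add_right hCD

theorem iterate_image_subset_image_traj_add (f : H →+ G) (φ : H →+ H) (ψ : G →+ G)
    (hf : ∀ x, f (φ x) = ψ (f x)) {E : Set H} (hE : 0 ∈ E) {U : Set G}
    (hU : ψ '' U ⊆ f '' E + U) (k : ℕ) : ψ^[k] '' U ⊆ f '' traj φ E (k + 1) + U := by
  induction k with
  | zero =>
    rw [Function.iterate_zero, Set.image_id, traj_one]
    exact Set.subset_add_right U ⟨0, hE, map_zero f⟩
  | succ k ih =>
    calc ψ^[k + 1] '' U = ψ '' (ψ^[k] '' U) := by rw [Function.iterate_succ', Set.image_comp]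
      _ ⊆ ψ '' (f '' traj φ E (k + 1)) + ψ '' U := by
        rw [← Set.image_add]; exact Set.image_mono ih
      _ ⊆ f '' (φ '' traj φ E (k + 1)) + (f '' E + U) := by
        rw [Set.image_image, Set.image_image]
        simp only [← hf]
        exact Set.add_subset_add_left hU
      _ = f '' traj φ E (k + 1 + 1) + U := by
        rw [traj_succ φ E (k + 1), Set.image_add, add_left_comm, add_assoc]

theorem trajLe_subset_image_traj_add (f : H →+ G) (φ : H →+ H) (ψ : G →+ G)
    (hf : ∀ x, f (φ x) = ψ (f x)) {E : Set H} (hE : 0 ∈ E) {U : Set G}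
    (hU : ψ '' U ⊆ f '' E + U) (hUU : U + U ⊆ U) {n : ℕ} (hn : n ≠ 0) :
    trajLe ψ U n ⊆ f '' traj φ E n + U := by
  have hsub := iterate_image_subset_image_traj_add f φ ψ hf hE hU (n - 1)
  rw [Nat.sub_add_cancel (Nat.one_le_iff_ne_zero.mpr hn)] at hsub
  calc trajLe ψ U n ⊆ U + (f '' traj φ E n + U) := Set.add_subset_add_left hsub
    _ = f '' traj φ E n + (U + U) := by rw [add_left_comm]
    _ ⊆ f '' traj φ E n + U := Set.add_subset_add_left hUU

end Trajectory

theorem zero_mem_Em (N m : ℕ) : (0 : Fin N → ℚ) ∈ Em N m :=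
  fun _ => ⟨0, by simp, by simp⟩

section Polydisc

variable (ι : Type*) {K : Type*}

/-- The paper's `D_{p,N}(r)` is `polydisc (Fin N) r`, and `ℤ_p^N` is `polydisc (Fin N) 1`. -/
def polydisc [Norm K] (r : ℝ) : Set (ι → K) := {x | ∀ i, ‖x i‖ ≤ r}

variable {ι}

theorem polydisc_add_polydisc_subset_of_le [SeminormedAddCommGroup K] [IsUltrametricDist K]
    {r s : ℝ} (hsr : s ≤ r) : polydisc ι (K := K) r + polydisc ι s ⊆ polydisc ι r := by
  rintro _ ⟨x, hx, y, hy, rfl⟩ i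
  exact (IsUltrametricDist.norm_add_le_max (x i) (y i)).trans (max_le (hx i) ((hy i).trans hsr))

theorem Matrix.norm_mulVec_apply_le_of_mem_polydisc_one {κ R : Type*} [Fintype κ]
    [SeminormedRing R] (M : Matrix ι κ R) {y : κ → R} (hy : y ∈ polydisc κ 1) (i : ι) :
    ‖M.mulVec y i‖ ≤ ∑ j, ‖M i j‖ :=
  calc ‖∑ j, M i j * y j‖ ≤ ∑ j, ‖M i j * y j‖ := norm_sum_le _ _
    _ ≤ ∑ j, ‖M i j‖ := Finset.sum_le_sum fun j _ =>
      (norm_mul_le _ _).trans (mul_le_of_le_one_right (norm_nonneg _) (hy j))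

end Polydisc

namespace Padic

variable {p : ℕ} [Fact p.Prime]

theorem mulVec_image_polydisc_one_subset {ι : Type*} [Fintype ι] (B : Matrix ι ι ℚ_[p])
    {h : ℕ} (hB : ⨆ i, ∑ j, ‖B i j‖ < (p : ℝ) ^ (h + 1)) :
    B.mulVec '' polydisc ι 1 ⊆ polydisc ι ((p : ℝ) ^ h) := by
  rintro _ ⟨y, hy, rfl⟩ i
  have hlt : ‖B.mulVec y i‖ < (p : ℝ) ^ ((h : ℤ) + 1) := by
    calc ‖B.mulVec y i‖ ≤ ∑ j, ‖B i j‖ := B.norm_mulVec_apply_le_of_mem_polydisc_one hy i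
      _ ≤ ⨆ i, ∑ j, ‖B i j‖ :=
        le_ciSup (f := fun i => ∑ j, ‖B i j‖) (Set.finite_range _).bddAbove i
      _ < (p : ℝ) ^ ((h : ℤ) + 1) := by exact_mod_cast hB
  exact_mod_cast (norm_le_pow_iff_norm_lt_pow_add_one _ _).mpr hlt

theorem exists_int_div_sub_norm_le_one {m h : ℕ} (hm : 0 < m) (hdvd : p ^ h ∣ m)
    {x : ℚ_[p]} (hx : ‖x‖ ≤ (p : ℝ) ^ h) :
    ∃ j : ℤ, |j| ≤ m ∧ ‖x - (((j : ℚ) / m : ℚ) : ℚ_[p])‖ ≤ 1 := by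
  obtain ⟨d, rfl⟩ := hdvd
  have hp : (0 : ℝ) < p := by exact_mod_cast (Fact.out : p.Prime).pos
  have hd : d ≠ 0 := by rintro rfl; simp at hm
  have hq : ‖(p : ℚ_[p]) ^ h‖ = ((p : ℝ) ^ h)⁻¹ := by rw [norm_p_pow, zpow_neg, zpow_natCast]
  have hq0 : (p : ℚ_[p]) ^ h ≠ 0 := pow_ne_zero _ (by exact_mod_cast (Fact.out : p.Prime).ne_zero)
  have hy : ‖(p : ℚ_[p]) ^ h * x‖ ≤ 1 := by
    rw [norm_mul, hq]; exact inv_mul_le_one_of_le₀ hx (by positivity)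
  set z : ℤ_[p] := ⟨_, hy⟩
  have hk : ‖(p : ℚ_[p]) ^ h * x - z.appr h‖ ≤ ((p : ℝ) ^ h)⁻¹ := by
    have := (PadicInt.norm_le_pow_iff_mem_span_pow _ _).mpr (z.appr_spec h)
    rwa [zpow_neg, zpow_natCast, PadicInt.norm_def, PadicInt.coe_sub] at this
  refine ⟨d * z.appr h, ?_, ?_⟩
  · rw [abs_of_nonneg (by positivity)]
    have := z.appr_lt h
    push_cast
    nlinarith
  · have key : x - (((d * z.appr h : ℤ) : ℚ) / ((p ^ h * d : ℕ) : ℚ) : ℚ)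
        = ((p : ℚ_[p]) ^ h * x - z.appr h) / (p : ℚ_[p]) ^ h := by
      push_cast
      field_simp
    rw [key, norm_div, hq, div_inv_eq_mul]
    calc _ ≤ ((p : ℝ) ^ h)⁻¹ * (p : ℝ) ^ h := by gcongr
      _ = 1 := inv_mul_cancel₀ (by positivity)

theorem one_le_norm_natCast_inv {m : ℕ} (hm : m ≠ 0) : 1 ≤ ‖((m : ℚ) : ℚ_[p])⁻¹‖ := by
  rw [norm_inv, Rat.cast_natCast]
  exact (one_le_inv₀ (norm_pos_iff.mpr (by exact_mod_cast hm))).mpr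
    (IsUltrametricDist.norm_natCast_le_one _ _)

variable (p) (ι : Type*)

/-- The paper's `α_p`. -/
def castPi : (ι → ℚ) →+ (ι → ℚ_[p]) := (Rat.castHom ℚ_[p]).toAddMonoidHom.compLeft ι

variable {p ι}

@[simp]
theorem castPi_apply (c : ι → ℚ) (i : ι) : castPi p ι c i = (c i : ℚ_[p]) := rfl

theorem castPi_mulVec [Fintype ι] (A : Matrix ι ι ℚ) (c : ι → ℚ) :
    castPi p ι (A.mulVec c) = (A.map ((↑) : ℚ → ℚ_[p])).mulVec (castPi p ι c) :=
  funext (RingHom.map_mulVec (Rat.castHom ℚ_[p]) A c)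

theorem castPi_image_Em_subset {N m : ℕ} :
    castPi p (Fin N) '' Em N m ⊆ polydisc (Fin N) ‖((m : ℚ) : ℚ_[p])⁻¹‖ := by
  rintro _ ⟨c, hc, rfl⟩ i
  obtain ⟨j, -, hj⟩ := hc i
  rw [castPi_apply, hj, div_eq_mul_inv, Rat.cast_mul, Rat.cast_inv, norm_mul, Rat.cast_intCast]
  exact mul_le_of_le_one_left (norm_nonneg _) (norm_int_le_one j)

theorem polydisc_subset_castPi_image_Em_add {N m h : ℕ} (hm : 0 < m) (hdvd : p ^ h ∣ m) :
    polydisc (Fin N) ((p : ℝ) ^ h) ⊆ castPi p (Fin N) '' Em N m + polydisc (Fin N) 1 := by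
  intro y hy
  choose j hj hyj using fun i => exists_int_div_sub_norm_le_one hm hdvd (hy i)
  exact ⟨castPi p (Fin N) fun i => (j i : ℚ) / m, ⟨_, fun i => ⟨j i, hj i, rfl⟩, rfl⟩,
    y - castPi p (Fin N) fun i => (j i : ℚ) / m, hyj, add_sub_cancel _ _⟩

end Padic

theorem padic_trajectory_comparison_general
    (p : ℕ) [Fact p.Prime] {N : ℕ}
    (φ : (Fin N → ℚ) →+ (Fin N → ℚ)) (A : Matrix (Fin N) (Fin N) ℚ)
    (hφ : ∀ x, φ x = A.mulVec x) :
    (∀ m n : ℕ, 0 < m → 1 ≤ n →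
      ((fun c : Fin N → ℚ => fun i => ((c i : ℚ) : ℚ_[p])) '' traj (⇑φ) (Em N m) n) +
          {x : Fin N → ℚ_[p] | ∀ i, ‖x i‖ ≤ 1} ⊆
        traj (A.map (fun q : ℚ => ((q : ℚ) : ℚ_[p]))).mulVec
          {x : Fin N → ℚ_[p] | ∀ i, ‖x i‖ ≤ ‖(((m : ℚ))⁻¹ : ℚ_[p])‖} n) ∧
    (∀ m h : ℕ, 0 < m →
      ((p : ℝ) ^ h ≤ ⨆ i : Fin N, ∑ j : Fin N, ‖((A i j : ℚ) : ℚ_[p])‖) →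
      ((⨆ i : Fin N, ∑ j : Fin N, ‖((A i j : ℚ) : ℚ_[p])‖) < (p : ℝ) ^ (h + 1)) →
      p ^ h ∣ m →
      ∀ n : ℕ, 1 ≤ n →
        trajLe (A.map (fun q : ℚ => ((q : ℚ) : ℚ_[p]))).mulVec
            {x : Fin N → ℚ_[p] | ∀ i, ‖x i‖ ≤ 1} n ⊆
          ((fun c : Fin N → ℚ => fun i => ((c i : ℚ) : ℚ_[p])) '' traj (⇑φ) (Em N m) n) +
            {x : Fin N → ℚ_[p] | ∀ i, ‖x i‖ ≤ 1}) := by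
  set B := A.map (fun q : ℚ => ((q : ℚ) : ℚ_[p]))
  let ψ : (Fin N → ℚ_[p]) →+ (Fin N → ℚ_[p]) := B.mulVecLin.toAddMonoidHom
  have hcomm : ∀ c, Padic.castPi p (Fin N) (φ c) = ψ (Padic.castPi p (Fin N) c) := fun c => by
    rw [hφ]; exact Padic.castPi_mulVec A c
  refine ⟨fun m n hm hn => ?_, fun m h hm _ hlt hdvd n hn => ?_⟩
  · have hε := Padic.one_le_norm_natCast_inv (p := p) hm.ne'
    change Padic.castPi p (Fin N) '' traj φ (Em N m) n + polydisc (Fin N) 1 ⊆ traj ψ _ n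
    rw [image_traj _ φ ψ hcomm]
    exact (Set.add_subset_add_right (traj_mono ψ Padic.castPi_image_Em_subset n)).trans
      (traj_add_subset ψ (polydisc_add_polydisc_subset_of_le hε) (by omega))
  · exact trajLe_subset_image_traj_add (Padic.castPi p (Fin N)) φ ψ hcomm (zero_mem_Em N m)
      ((Padic.mulVec_image_polydisc_one_subset B hlt).trans
        (Padic.polydisc_subset_castPi_image_Em_add hm hdvd))
      (polydisc_add_polydisc_subset_of_le le_rfl) (by omega)

/-- **Comparison of the `p`-adic trajectories `T^p_n(φ, E_m)` with trajectories of `φ_p`.**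
Let `φ` be an endomorphism of `ℚ^N` with matrix `A`, and `φ_p` the endomorphism of
`ℚ_p^N` with the same matrix.  Then (1) `T^p_n(φ,E_m) ⊆ T_n(φ_p, D_{p,N}(|1/m|_p))`;
and (2) if `h` is the maximal nonnegative integer with `p^h ≤ ‖φ_p‖_p`
(where `‖φ_p‖_p = max_i Σ_j |A i j|_p`) and `p^h ∣ m`, then
`T_n^≤(φ_p, ℤ_p^N) ⊆ T^p_n(φ, E_m)`. -/
theorem padic_trajectory_comparison
    (p : ℕ) [Fact p.Prime] {N : ℕ} (hN : 0 < N)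
    (φ : (Fin N → ℚ) →+ (Fin N → ℚ)) (A : Matrix (Fin N) (Fin N) ℚ)
    (hφ : ∀ x, φ x = A.mulVec x) :
    (∀ m n : ℕ, 0 < m → 1 ≤ n →
      ((fun c : Fin N → ℚ => fun i => ((c i : ℚ) : ℚ_[p])) '' traj (⇑φ) (Em N m) n) +
          {x : Fin N → ℚ_[p] | ∀ i, ‖x i‖ ≤ 1} ⊆
        traj (A.map (fun q : ℚ => ((q : ℚ) : ℚ_[p]))).mulVec
          {x : Fin N → ℚ_[p] | ∀ i, ‖x i‖ ≤ ‖(((m : ℚ))⁻¹ : ℚ_[p])‖} n) ∧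
    (∀ m h : ℕ, 0 < m →
      ((p : ℝ) ^ h ≤ ⨆ i : Fin N, ∑ j : Fin N, ‖((A i j : ℚ) : ℚ_[p])‖) →
      ((⨆ i : Fin N, ∑ j : Fin N, ‖((A i j : ℚ) : ℚ_[p])‖) < (p : ℝ) ^ (h + 1)) →
      p ^ h ∣ m →
      ∀ n : ℕ, 1 ≤ n →
        trajLe (A.map (fun q : ℚ => ((q : ℚ) : ℚ_[p]))).mulVec
            {x : Fin N → ℚ_[p] | ∀ i, ‖x i‖ ≤ 1} n ⊆
          ((fun c : Fin N → ℚ => fun i => ((c i : ℚ) : ℚ_[p])) '' traj (⇑φ) (Em N m) n) +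
            {x : Fin N → ℚ_[p] | ∀ i, ‖x i‖ ≤ 1}) :=
  padic_trajectory_comparison_general p φ A hφ
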